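/- Under the gaps-and-weight setup, fix indices k ≠ j in {1, …, n} with G_j nonempty. For a choice of parameters η_i ∈ [b_{2i−1}, b_{2i}] for each i ≠ k, set J(η) = I_j( t ↦ ∏_{i≠k}(t − η_i) ). Then there is a sign s ∈ {−1, +1}, depending only on n, j, k, ε_j and G_j (and not on the choice of the parameters η_i), such that: whenever η_j = b_{2j−1} one has s · J(η) > 0, and whenever η_j = b_{2j} one has s · J(η) < 0. In particular J(η) is nonzero at both endpoint choices, with opposite signs that do not depend on the positions of the other parameters η_i, i ≠ j, k. -/

import Mathlib

/-! On gap `j = (a, B)` the weight factors as `w(t) = √((t - a)(B - t) P(t))` with `P` bounded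
below by a positive constant on `[a, B]`, so `f / w` is integrable there for continuous `f`, and
its integral over any piece of the gap is positive when `f` is positive on the gap. Now
`∏_{i≠k} (t - ηᵢ) = (t - η_j) R(t)`, where `R` has the constant sign `(-1)^m` on the gap, `m` being
the number of `ηᵢ`, `i ≠ j, k`, that lie in gaps above gap `j`. With `η_j = a` the integrand
times `(-1)^m` is positive on the gap, with `η_j = B` it is negative, and `ε_j` is absorbed into
the sign `s = ε_j (-1)^m`. -/

open Finset

noncomputable def gapWeight (n : ℕ) (b : Fin (2 * n + 1) → ℝ) (t : ℝ) : ℝ :=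
  Real.sqrt (-∏ i, (t - b i))

noncomputable def gapIntegral (n : ℕ) (b : Fin (2 * n + 1) → ℝ) (ε : Fin n → ℝ)
    (G : Fin n → List (ℝ × ℝ)) (j : Fin n) (f : ℝ → ℝ) : ℝ :=
  ε j * ((G j).map fun pr => ∫ t in pr.1..pr.2, f t / gapWeight n b t).sum

open Set MeasureTheory

lemma sqrt_add_le_sqrt_add_sqrt {x y : ℝ} (hx : 0 ≤ x) (hy : 0 ≤ y) : √(x + y) ≤ √x + √y := by
  rw [Real.sqrt_le_left (by positivity)]
  nlinarith [Real.sq_sqrt hx, Real.sq_sqrt hy, Real.sqrt_nonneg x, Real.sqrt_nonneg y]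

lemma inv_sqrt_mul_le {x y : ℝ} (hx : 0 < x) (hy : 0 < y) :
    (√(x * y))⁻¹ ≤ (√(x + y))⁻¹ * ((√x)⁻¹ + (√y)⁻¹) := by
  have hsx := Real.sqrt_pos.2 hx
  have hsy := Real.sqrt_pos.2 hy
  have hsxy : 0 < √(x + y) := Real.sqrt_pos.2 (by positivity)
  rw [Real.sqrt_mul hx.le]
  calc (√x * √y)⁻¹ = (√(x + y))⁻¹ * (√(x + y) / (√x * √y)) := by field_simp
    _ ≤ (√(x + y))⁻¹ * ((√x + √y) / (√x * √y)) := by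
        gcongr; exact sqrt_add_le_sqrt_add_sqrt hx.le hy.le
    _ = (√(x + y))⁻¹ * ((√x)⁻¹ + (√y)⁻¹) := by field_simp; ring

lemma integrableOn_Ioo_inv_sqrt_sub_left (a b : ℝ) :
    IntegrableOn (fun t => (√(t - a))⁻¹) (Ioo a b) := by
  rcases le_or_gt b a with hba | hab
  · simp [Ioo_eq_empty_of_le hba]
  have hpow : IntervalIntegrable (fun t => (t - a) ^ (-(1 / 2) : ℝ)) volume a b := by
    simpa using (intervalIntegral.intervalIntegrable_rpow' (a := 0) (b := b - a)
      (r := -(1 / 2)) (by norm_num)).comp_sub_right a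
  refine ((intervalIntegrable_iff_integrableOn_Ioo_of_le hab.le).1 hpow).congr_fun
    (fun t ht => ?_) measurableSet_Ioo
  dsimp only
  rw [Real.rpow_neg (sub_nonneg.2 ht.1.le), ← Real.sqrt_eq_rpow]

lemma integrableOn_Ioo_inv_sqrt_sub_right (a b : ℝ) :
    IntegrableOn (fun t => (√(b - t))⁻¹) (Ioo a b) := by
  simpa [neg_add_eq_sub] using (integrableOn_Ioo_inv_sqrt_sub_left (-b) (-a)).comp_neg

/-- The singularity of `1 / √((t - a)(b - t))` at each end of `(a, b)` is that of `1 / √s` at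
`0`, as `√(b - a) ≤ √(t - a) + √(b - t)`. -/
lemma integrableOn_Ioo_inv_sqrt_mul_sub (a b : ℝ) :
    IntegrableOn (fun t => (√((t - a) * (b - t)))⁻¹) (Ioo a b) := by
  refine Integrable.mono' (((integrableOn_Ioo_inv_sqrt_sub_left a b).add
    (integrableOn_Ioo_inv_sqrt_sub_right a b)).const_mul (√(b - a))⁻¹)
    (by fun_prop) ((ae_restrict_iff' measurableSet_Ioo).2 (.of_forall fun t ht => ?_))
  rw [Real.norm_of_nonneg (by positivity)]
  have := inv_sqrt_mul_le (sub_pos.2 ht.1) (sub_pos.2 ht.2)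
  rwa [sub_add_sub_cancel'] at this

section WeightedIntegral

variable {a b : ℝ} {f P : ℝ → ℝ}

lemma integrableOn_Ioo_div_sqrt (hf : ContinuousOn f (Icc a b)) (hP : ContinuousOn P (Icc a b))
    (hP0 : ∀ t ∈ Icc a b, 0 < P t) :
    IntegrableOn (fun t => f t / √((t - a) * (b - t) * P t)) (Ioo a b) := by
  rcases le_or_gt b a with hba | hab
  · simp [Ioo_eq_empty_of_le hba]
  obtain ⟨t₀, ht₀, hmin⟩ := isCompact_Icc.exists_isMinOn (nonempty_Icc.2 hab.le) hP
  obtain ⟨M, hM⟩ := isCompact_Icc.exists_bound_of_continuousOn hf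
  have hM0 : 0 ≤ M := (norm_nonneg _).trans (hM t₀ ht₀)
  have hP₀ : 0 < √(P t₀) := Real.sqrt_pos.2 (hP0 t₀ ht₀)
  have hmeas : ContinuousOn (fun t => f t / √((t - a) * (b - t) * P t)) (Ioo a b) := by
    refine (hf.mono Ioo_subset_Icc_self).div (((continuousOn_id.sub continuousOn_const).mul
      (continuousOn_const.sub continuousOn_id)).mul (hP.mono Ioo_subset_Icc_self)).sqrt
      fun t ht => (Real.sqrt_pos.2 ?_).ne'
    exact mul_pos (mul_pos (sub_pos.2 ht.1) (sub_pos.2 ht.2)) (hP0 t (Ioo_subset_Icc_self ht))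
  refine Integrable.mono' ((integrableOn_Ioo_inv_sqrt_mul_sub a b).const_mul (M / √(P t₀)))
    (hmeas.aestronglyMeasurable measurableSet_Ioo)
    ((ae_restrict_iff' measurableSet_Ioo).2 (.of_forall fun t ht => ?_))
  have hxy₀ : 0 < (t - a) * (b - t) := mul_pos (sub_pos.2 ht.1) (sub_pos.2 ht.2)
  have hxy : 0 < √((t - a) * (b - t)) := Real.sqrt_pos.2 hxy₀
  have hPt : √(P t₀) ≤ √(P t) := Real.sqrt_le_sqrt (hmin (Ioo_subset_Icc_self ht))
  rw [norm_div, Real.norm_of_nonneg (Real.sqrt_nonneg _), Real.sqrt_mul hxy₀.le]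
  calc ‖f t‖ / (√((t - a) * (b - t)) * √(P t))
      ≤ M / (√((t - a) * (b - t)) * √(P t₀)) :=
        div_le_div₀ hM0 (hM t (Ioo_subset_Icc_self ht)) (mul_pos hxy hP₀) (by gcongr)
    _ = M / √(P t₀) * (√((t - a) * (b - t)))⁻¹ := by field_simp

lemma intervalIntegral_div_sqrt_pos (hf : ContinuousOn f (Icc a b))
    (hP : ContinuousOn P (Icc a b)) (hP0 : ∀ t ∈ Icc a b, 0 < P t)
    (hfpos : ∀ t ∈ Ioo a b, 0 < f t) {c d : ℝ} (hc : a ≤ c) (hcd : c < d) (hd : d ≤ b) :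
    0 < ∫ t in c..d, f t / √((t - a) * (b - t) * P t) := by
  refine intervalIntegral.intervalIntegral_pos_of_pos_on
    ((intervalIntegrable_iff_integrableOn_Ioo_of_le hcd.le).2
      ((integrableOn_Ioo_div_sqrt hf hP hP0).mono_set (Ioo_subset_Ioo hc hd))) (fun t ht => ?_) hcd
  have ht' : t ∈ Ioo a b := ⟨hc.trans_lt ht.1, ht.2.trans_le hd⟩
  exact div_pos (hfpos t ht') (Real.sqrt_pos.2 (mul_pos
    (mul_pos (sub_pos.2 ht'.1) (sub_pos.2 ht'.2)) (hP0 t (Ioo_subset_Icc_self ht'))))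

end WeightedIntegral

lemma neg_one_pow_mul_prod_sub_pos {ι : Type*} (s : Finset ι) (p : ι → Prop) [DecidablePred p]
    {x : ι → ℝ} {t : ℝ} (hlt : ∀ i ∈ s, p i → t < x i) (hgt : ∀ i ∈ s, ¬ p i → x i < t) :
    0 < (-1) ^ #{i ∈ s | p i} * ∏ i ∈ s, (t - x i) := by
  have habove : ∏ i ∈ s with p i, (t - x i) =
      (-1) ^ #{i ∈ s | p i} * ∏ i ∈ s with p i, (x i - t) := by
    rw [← prod_neg]; simp only [neg_sub]
  have hsq : ((-1 : ℝ) ^ #{i ∈ s | p i}) * (-1) ^ #{i ∈ s | p i} = 1 := by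
    rw [← mul_pow]; norm_num
  rw [← prod_filter_mul_prod_filter_not s p, habove, ← mul_assoc, ← mul_assoc, hsq, one_mul]
  refine mul_pos (prod_pos fun i hi => ?_) (prod_pos fun i hi => ?_)
  · rw [mem_filter] at hi; linarith [hlt i hi.1 hi.2]
  · rw [mem_filter] at hi; linarith [hgt i hi.1 hi.2]

lemma neg_prod_sub_eq_mul_prod_erase {ι : Type*} [Fintype ι] [DecidableEq ι] (x : ι → ℝ)
    {i₁ i₂ : ι} (h : i₁ ≠ i₂) (t : ℝ) :
    -∏ i, (t - x i) = (t - x i₁) * (x i₂ - t) * ∏ i ∈ (univ.erase i₁).erase i₂, (t - x i) := by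
  rw [← mul_prod_erase univ _ (mem_univ i₁),
    ← mul_prod_erase _ _ (mem_erase.2 ⟨h.symm, mem_univ i₂⟩)]
  ring

section Gap

variable {n : ℕ} {b : Fin (2 * n + 1) → ℝ}

/-- The `0`-indexed gap `j` is `(b (gapLo j), b (gapHi j)) = (b_{2j+1}, b_{2j+2})`,
the paper's gap `j + 1`. -/
abbrev gapLo (j : Fin n) : Fin (2 * n + 1) := ⟨2 * j + 1, by have := j.isLt; omega⟩

abbrev gapHi (j : Fin n) : Fin (2 * n + 1) := ⟨2 * j + 2, by have := j.isLt; omega⟩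

lemma gapLo_lt_gapHi (j : Fin n) : gapLo j < gapHi j := by
  simp [Fin.lt_def]

lemma gapHi_le_gapLo {i j : Fin n} (h : i < j) : gapHi i ≤ gapLo j := by
  rw [Fin.lt_def] at h; simp only [Fin.le_def]; omega

/-- Exactly `2n - 2j - 2` of the remaining roots lie above gap `j`, an even number. -/
lemma prod_erase_gapLo_gapHi_pos (hb : StrictMono b) (j : Fin n) {t : ℝ}
    (ht : t ∈ Icc (b (gapLo j)) (b (gapHi j))) :
    0 < ∏ i ∈ (univ.erase (gapLo j)).erase (gapHi j), (t - b i) := by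
  have hbelow : ∀ i ∈ (univ.erase (gapLo j)).erase (gapHi j), ¬ gapHi j < i → b i < t := by
    intro i hi hle
    refine (hb ?_).trans_le ht.1
    simp only [mem_erase, ne_eq, Fin.ext_iff, gapLo, gapHi] at hi
    simp only [not_lt, Fin.le_def, gapHi] at hle
    simp only [Fin.lt_def, gapLo]; omega
  have hsign := neg_one_pow_mul_prod_sub_pos _ (fun i => gapHi j < i)
    (fun i _ hi => ht.2.trans_lt (hb hi)) hbelow
  have hcard :
      #{i ∈ (univ.erase (gapLo j)).erase (gapHi j) | gapHi j < i} = #(Ioi (gapHi j)) := by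
    congr 1; ext i
    simp only [mem_filter, mem_erase, ne_eq, Finset.mem_univ, Finset.mem_Ioi, Fin.ext_iff,
      Fin.lt_def, and_true, gapLo, gapHi]
    omega
  have heven : Even #(Ioi (gapHi j)) := ⟨n - j - 1, by simp only [Fin.card_Ioi, gapHi]; omega⟩
  rwa [hcard, heven.neg_one_pow, one_mul] at hsign

lemma gapWeight_eq_sqrt (j : Fin n) (t : ℝ) :
    gapWeight n b t = √((t - b (gapLo j)) * (b (gapHi j) - t) *
      ∏ i ∈ (univ.erase (gapLo j)).erase (gapHi j), (t - b i)) := by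
  rw [gapWeight, neg_prod_sub_eq_mul_prod_erase b (gapLo_lt_gapHi j).ne]

lemma intervalIntegral_div_gapWeight_pos (hb : StrictMono b) (j : Fin n) {f : ℝ → ℝ}
    (hf : Continuous f) (hfpos : ∀ t ∈ Ioo (b (gapLo j)) (b (gapHi j)), 0 < f t)
    {c d : ℝ} (hc : b (gapLo j) ≤ c) (hcd : c < d) (hd : d ≤ b (gapHi j)) :
    0 < ∫ t in c..d, f t / gapWeight n b t := by
  simp only [gapWeight_eq_sqrt j]
  exact intervalIntegral_div_sqrt_pos hf.continuousOn (by fun_prop)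
    (fun t ht => prod_erase_gapLo_gapHi_pos hb j ht) hfpos hc hcd hd

lemma neg_one_pow_mul_prod_sub_pos_of_mem_gaps (hb : Monotone b) {s : Finset (Fin n)} {j : Fin n}
    (hj : j ∉ s) {η : Fin n → ℝ} (hη : ∀ i ∈ s, η i ∈ Icc (b (gapLo i)) (b (gapHi i)))
    {t : ℝ} (ht : t ∈ Ioo (b (gapLo j)) (b (gapHi j))) :
    0 < (-1) ^ #{i ∈ s | j < i} * ∏ i ∈ s, (t - η i) := by
  refine neg_one_pow_mul_prod_sub_pos s _ (fun i hi hji => ?_) (fun i hi hij => ?_)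
  · exact ht.2.trans_le ((hb (gapHi_le_gapLo hji)).trans (hη i hi).1)
  · have hij : i < j := lt_of_le_of_ne (not_lt.1 hij) (ne_of_mem_of_not_mem hi hj)
    exact ((hη i hi).2.trans (hb (gapHi_le_gapLo hij))).trans_lt ht.1

variable {ε : Fin n → ℝ} {G : Fin n → List (ℝ × ℝ)} {j : Fin n}

lemma gapIntegral_const_mul (c : ℝ) (f : ℝ → ℝ) :
    gapIntegral n b ε G j (fun t => c * f t) = c * gapIntegral n b ε G j f := by
  simp only [gapIntegral, mul_div_assoc, intervalIntegral.integral_const_mul,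
    List.sum_map_mul_left]
  ring

lemma mul_gapIntegral_pos (hb : StrictMono b) (hε : ε j = 1 ∨ ε j = -1)
    (hG : ∀ pr ∈ G j, b (gapLo j) ≤ pr.1 ∧ pr.1 < pr.2 ∧ pr.2 ≤ b (gapHi j))
    (hj : G j ≠ []) {f : ℝ → ℝ} (hf : Continuous f)
    (hfpos : ∀ t ∈ Ioo (b (gapLo j)) (b (gapHi j)), 0 < f t) :
    0 < ε j * gapIntegral n b ε G j f := by
  have hεε : ε j * ε j = 1 := by rcases hε with h | h <;> rw [h] <;> norm_num
  rw [gapIntegral, ← mul_assoc, hεε, one_mul]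
  refine List.sum_pos _ (fun x hx => ?_) (by simpa using hj)
  obtain ⟨pr, hpr, rfl⟩ := List.mem_map.1 hx
  obtain ⟨hc, hcd, hd⟩ := hG pr hpr
  exact intervalIntegral_div_gapWeight_pos hb j hf hfpos hc hcd hd

end Gap

/-- The sign-flip step in the proof of the non-degeneration Lemma: for `k ≠ j` with `G_j`
nonempty, setting `J(η) = I_j(∏_{i≠k}(t − ηᵢ))` with `ηᵢ ∈ [b_{2i−1}, b_{2i}]` for `i ≠ k`,
there is a sign `s` (independent of the `ηᵢ`) such that `s·J(η) > 0` whenever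
`η_j = b_{2j−1}` and `s·J(η) < 0` whenever `η_j = b_{2j}`. -/
theorem sign_flip_across_gap (n : ℕ)
    (b : Fin (2 * n + 1) → ℝ) (hb : StrictMono b)
    (ε : Fin n → ℝ) (hε : ∀ j, ε j = 1 ∨ ε j = -1)
    (G : Fin n → List (ℝ × ℝ))
    (hG : ∀ j : Fin n, ∀ pr ∈ G j,
      b ⟨2 * (j : ℕ) + 1, by omega⟩ ≤ pr.1 ∧ pr.1 < pr.2 ∧
        pr.2 ≤ b ⟨2 * (j : ℕ) + 2, by omega⟩)
    (k j : Fin n) (hkj : k ≠ j) (hj : G j ≠ []) :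
    ∃ s : ℝ, (s = 1 ∨ s = -1) ∧
      ∀ η : Fin n → ℝ,
        (∀ i : Fin n, i ≠ k →
          η i ∈ Set.Icc (b ⟨2 * (i : ℕ) + 1, by omega⟩) (b ⟨2 * (i : ℕ) + 2, by omega⟩)) →
        (η j = b ⟨2 * (j : ℕ) + 1, by omega⟩ →
          0 < s * gapIntegral n b ε G j (fun t => ∏ i ∈ univ.erase k, (t - η i))) ∧
        (η j = b ⟨2 * (j : ℕ) + 2, by omega⟩ →
          s * gapIntegral n b ε G j (fun t => ∏ i ∈ univ.erase k, (t - η i)) < 0) := by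
  set m := #{i ∈ (univ.erase k).erase j | j < i}
  refine ⟨ε j * (-1) ^ m, ?_, fun η hη => ?_⟩
  · rcases hε j with h | h <;> rcases neg_one_pow_eq_or ℝ m with h' | h' <;> simp [h, h']
  have hsplit (t : ℝ) : ∏ i ∈ univ.erase k, (t - η i) =
      (t - η j) * ∏ i ∈ (univ.erase k).erase j, (t - η i) :=
    (mul_prod_erase _ _ (mem_erase.2 ⟨hkj.symm, mem_univ j⟩)).symm
  have hrest : ∀ t ∈ Ioo (b (gapLo j)) (b (gapHi j)),
      0 < (-1) ^ m * ∏ i ∈ (univ.erase k).erase j, (t - η i) := fun t ht =>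
    neg_one_pow_mul_prod_sub_pos_of_mem_gaps hb.monotone (notMem_erase j _)
      (fun i hi => hη i (ne_of_mem_erase (mem_of_mem_erase hi))) ht
  refine ⟨fun hηj => ?_, fun hηj => ?_⟩
  · rw [mul_assoc, ← gapIntegral_const_mul]
    refine mul_gapIntegral_pos hb (hε j) (hG j) hj (by fun_prop) fun t ht => ?_
    rw [hsplit, hηj]
    nlinarith [hrest t ht, ht.1]
  · have := mul_gapIntegral_pos hb (hε j) (hG j) hj
      (f := fun t => -(-1) ^ m * ∏ i ∈ univ.erase k, (t - η i)) (by fun_prop) fun t ht => ?_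
    · rw [gapIntegral_const_mul] at this; linarith
    rw [hsplit, hηj]
    nlinarith [hrest t ht, ht.2]
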